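/- Let k ≥ 2 be an integer, a = (a_1,…,a_k) ∈ ℝ^k, and c_1,…,c_k > 0. Then the system x_1 − 2c_1/x_1 = a_1 − c_2/x_2; x_i − 2c_i/x_i = a_i − c_{i−1}/x_{i−1} − c_{i+1}/x_{i+1} for i = 2,…,k−1; x_k − 2c_k/x_k = a_k − c_{k−1}/x_{k−1} has a unique solution (x_1^*,…,x_k^*) with all x_i^* > 0. Moreover, defining x_i^{(0)} = (a_i + √(a_i² + 8c_i))/2 for i = 1,…,k and recursively x_1^{(n+1)} = (A_1^{(n)} + √((A_1^{(n)})² + 8c_1))/2 with A_1^{(n)} = a_1 − c_2/x_2^{(n)}, x_i^{(n+1)} = (A_i^{(n)} + √((A_i^{(n)})² + 8c_i))/2 with A_i^{(n)} = a_i − c_{i−1}/x_{i−1}^{(n)} − c_{i+1}/x_{i+1}^{(n)} for i = 2,…,k−1, and x_k^{(n+1)} = (A_k^{(n)} + √((A_k^{(n)})² + 8c_k))/2 with A_k^{(n)} = a_k − c_{k−1}/x_{k−1}^{(n)}, the sequence (x_i^{(n)})_{n ≥ 0} is decreasing in n for each i and converges to x_i^* as n → ∞. -/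

import Mathlib

open Filter

/-- The drift term `A_i^{(n)}` of the iterative scheme for the nearest-neighbour
system, with `0`-based indices `0,…,k-1`. -/
noncomputable def nnDrift (k : ℕ) (a c : ℕ → ℝ) (x : ℕ → ℝ) (i : ℕ) : ℝ :=
  if i = 0 then a 0 - c 1 / x 1
  else if i = k - 1 then a (k - 1) - c (k - 2) / x (k - 2)
  else a i - c (i - 1) / x (i - 1) - c (i + 1) / x (i + 1)

/-- The iterative scheme `x^{(n)}_i` of Proposition 4.1, with `0`-based indices:
`x^{(0)}_i = (a_i + √(a_i² + 8c_i))/2` and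
`x^{(n+1)}_i = (A_i^{(n)} + √((A_i^{(n)})² + 8c_i))/2`. -/
noncomputable def nnIter (k : ℕ) (a c : ℕ → ℝ) : ℕ → ℕ → ℝ
  | 0 => fun i => (a i + Real.sqrt ((a i) ^ 2 + 8 * c i)) / 2
  | n + 1 => fun i =>
      (nnDrift k a c (nnIter k a c n) i
        + Real.sqrt ((nnDrift k a c (nnIter k a c n) i) ^ 2 + 8 * c i)) / 2

/-- The nearest-neighbour system of equations of Proposition 4.1 (with
`0`-based indices `0,…,k-1`):
`x_0 - 2c_0/x_0 = a_0 - c_1/x_1`,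
`x_i - 2c_i/x_i = a_i - c_{i-1}/x_{i-1} - c_{i+1}/x_{i+1}` for `1 ≤ i ≤ k-2`,
`x_{k-1} - 2c_{k-1}/x_{k-1} = a_{k-1} - c_{k-2}/x_{k-2}`. -/
def nnSol (k : ℕ) (a c : ℕ → ℝ) (x : ℕ → ℝ) : Prop :=
  x 0 - 2 * c 0 / x 0 = a 0 - c 1 / x 1 ∧
  (∀ i, 1 ≤ i → i ≤ k - 2 →
    x i - 2 * c i / x i = a i - c (i - 1) / x (i - 1) - c (i + 1) / x (i + 1)) ∧
  x (k - 1) - 2 * c (k - 1) / x (k - 1) = a (k - 1) - c (k - 2) / x (k - 2)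

/-! The positive root `posRoot c t` of `x² - t x - 2c` inverts the increasing map
`x ↦ x - 2c/x` on `(0, ∞)`, so positive solutions are exactly the fixed points of the sweep
`x ↦ (posRoot c_i (A_i x))_i`. The drift `A_i x` is increasing in `x` and at most `a_i`, so the
sweep is monotone and the iterates decrease; a positive subsolution built from a discrete
parabola bounds them from below, and their limit is a solution. Any positive solution, being a
fixed point, lies below every iterate and hence below the limit. Summing the equations shows
that `∑ x_i - c_0/x_0 - c_{k-1}/x_{k-1} = ∑ a_i` for every solution; as this quantity is strictly
increasing in each coordinate, the two ordered solutions coincide.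
-/

noncomputable def posRoot (c t : ℝ) : ℝ := (t + √(t ^ 2 + 8 * c)) / 2

section posRoot

variable {c t : ℝ}

theorem posRoot_pos (hc : 0 < c) : 0 < posRoot c t := by
  have h : |t| < √(t ^ 2 + 8 * c) := by
    rw [← Real.sqrt_sq_eq_abs]
    exact Real.sqrt_lt_sqrt (sq_nonneg t) (by linarith)
  unfold posRoot
  linarith [neg_abs_le t]

theorem posRoot_sub_div (hc : 0 < c) : posRoot c t - 2 * c / posRoot c t = t := by
  have hpos := posRoot_pos hc (t := t)
  have hsq : √(t ^ 2 + 8 * c) ^ 2 = t ^ 2 + 8 * c := Real.sq_sqrt (by positivity)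
  rw [sub_eq_iff_eq_add, ← sub_eq_iff_eq_add', eq_div_iff hpos.ne']
  unfold posRoot
  nlinarith

theorem strictMonoOn_sub_div (hc : 0 ≤ c) : StrictMonoOn (fun x : ℝ => x - 2 * c / x) (Set.Ioi 0) :=
  fun _ hx _ _ hxy => by
    have := div_le_div_of_nonneg_left (by positivity : 0 ≤ 2 * c) hx hxy.le
    dsimp only
    linarith

theorem le_posRoot_iff (hc : 0 < c) {x : ℝ} (hx : 0 < x) :
    x ≤ posRoot c t ↔ x - 2 * c / x ≤ t := by
  conv_rhs => rw [← posRoot_sub_div hc (t := t)]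
  exact ((strictMonoOn_sub_div hc.le).le_iff_le hx (posRoot_pos hc)).symm

theorem eq_posRoot_iff (hc : 0 < c) {x : ℝ} (hx : 0 < x) :
    x = posRoot c t ↔ x - 2 * c / x = t := by
  conv_rhs => rw [← posRoot_sub_div hc (t := t)]
  exact ((strictMonoOn_sub_div hc.le).injOn.eq_iff hx (posRoot_pos hc)).symm

theorem monotone_posRoot (hc : 0 < c) : Monotone (posRoot c) := fun _ _ hts =>
  (le_posRoot_iff hc (posRoot_pos hc)).2 (posRoot_sub_div hc ▸ hts)

theorem continuous_posRoot : Continuous (posRoot c) := by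
  unfold posRoot
  fun_prop

end posRoot

/-- The ratios `c_j / x_j` shifted by one and padded with zeros at the ghost sites `j = 0` and
`j = k + 1`, so that the drift reads uniformly `A_i = a_i - r_i - r_{i+2}` and the system
`x_i + r_i - 2 r_{i+1} + r_{i+2} = a_i`. -/
noncomputable def paddedRatio (k : ℕ) (c x : ℕ → ℝ) (j : ℕ) : ℝ :=
  if j = 0 ∨ k < j then 0 else c (j - 1) / x (j - 1)

section drift

variable {k : ℕ} {a c x y : ℕ → ℝ}

theorem paddedRatio_succ {i : ℕ} (hi : i < k) : paddedRatio k c x (i + 1) = c i / x i := by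
  simp [paddedRatio, show ¬k < i + 1 by omega]

theorem paddedRatio_nonneg (hc : ∀ i, i < k → 0 < c i) (hx : ∀ i, i < k → 0 < x i) (j : ℕ) :
    0 ≤ paddedRatio k c x j := by
  unfold paddedRatio
  split_ifs
  · rfl
  · exact (div_pos (hc _ (by omega)) (hx _ (by omega))).le

theorem paddedRatio_anti (hc : ∀ i, i < k → 0 < c i) (hx : ∀ i, i < k → 0 < x i)
    (hxy : ∀ i, i < k → x i ≤ y i) (j : ℕ) : paddedRatio k c y j ≤ paddedRatio k c x j := by
  unfold paddedRatio
  split_ifs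
  · rfl
  · exact div_le_div_of_nonneg_left (hc _ (by omega)).le (hx _ (by omega)) (hxy _ (by omega))

theorem paddedRatio_zero : paddedRatio k c x 0 = 0 := by
  simp [paddedRatio]

theorem paddedRatio_of_lt {j : ℕ} (hj : k < j) : paddedRatio k c x j = 0 := by
  simp [paddedRatio, hj]

theorem nnDrift_eq (hk : 2 ≤ k) {i : ℕ} (hi : i < k) :
    nnDrift k a c x i = a i - paddedRatio k c x i - paddedRatio k c x (i + 2) := by
  rw [nnDrift]
  split_ifs with h_first h_last
  · rw [h_first, paddedRatio_zero, paddedRatio_succ (by omega)]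
    ring
  · have h_prev := paddedRatio_succ (c := c) (x := x) (show k - 2 < k by omega)
    rw [show k - 2 + 1 = k - 1 by omega] at h_prev
    rw [h_last, h_prev, paddedRatio_of_lt (by omega)]
    ring
  · have h_prev := paddedRatio_succ (c := c) (x := x) (show i - 1 < k by omega)
    rw [Nat.sub_add_cancel (by omega)] at h_prev
    rw [h_prev, paddedRatio_succ (by omega)]

theorem nnDrift_le (hk : 2 ≤ k) (hc : ∀ i, i < k → 0 < c i) (hx : ∀ i, i < k → 0 < x i)
    {i : ℕ} (hi : i < k) : nnDrift k a c x i ≤ a i := by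
  rw [nnDrift_eq hk hi]
  linarith [paddedRatio_nonneg hc hx i, paddedRatio_nonneg hc hx (i + 2)]

theorem nnDrift_mono (hk : 2 ≤ k) (hc : ∀ i, i < k → 0 < c i) (hx : ∀ i, i < k → 0 < x i)
    (hxy : ∀ i, i < k → x i ≤ y i) {i : ℕ} (hi : i < k) :
    nnDrift k a c x i ≤ nnDrift k a c y i := by
  rw [nnDrift_eq hk hi, nnDrift_eq hk hi]
  linarith [paddedRatio_anti hc hx hxy i, paddedRatio_anti hc hx hxy (i + 2)]

theorem nnSol_iff (hk : 2 ≤ k) :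
    nnSol k a c x ↔ ∀ i, i < k → x i - 2 * c i / x i = nnDrift k a c x i := by
  unfold nnSol
  constructor
  · rintro ⟨h_first, h_mid, h_last⟩ i hi
    unfold nnDrift
    split_ifs with h0 h1
    · subst h0; exact h_first
    · subst h1; exact h_last
    · exact h_mid i (by omega) (by omega)
  · intro h
    refine ⟨?_, fun i h1 h2 => ?_, ?_⟩
    · simpa [nnDrift] using h 0 (by omega)
    · simpa [nnDrift, show i ≠ 0 by omega, show i ≠ k - 1 by omega] using h i (by omega)
    · simpa [nnDrift, show k - 1 ≠ 0 by omega] using h (k - 1) (by omega)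

end drift

noncomputable def nnStep (k : ℕ) (a c x : ℕ → ℝ) (i : ℕ) : ℝ :=
  posRoot (c i) (nnDrift k a c x i)

section iteration

variable {k : ℕ} {a c x y : ℕ → ℝ}

theorem nnIter_succ (n : ℕ) : nnIter k a c (n + 1) = nnStep k a c (nnIter k a c n) := rfl

theorem nnStep_pos (hc : ∀ i, i < k → 0 < c i) {i : ℕ} (hi : i < k) :
    0 < nnStep k a c x i :=
  posRoot_pos (hc i hi)

theorem nnIter_pos (hc : ∀ i, i < k → 0 < c i) (n : ℕ) {i : ℕ} (hi : i < k) :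
    0 < nnIter k a c n i := by
  cases n
  · exact posRoot_pos (hc i hi)
  · exact nnStep_pos hc hi

theorem nnStep_le_nnIter_zero (hk : 2 ≤ k) (hc : ∀ i, i < k → 0 < c i)
    (hx : ∀ i, i < k → 0 < x i) {i : ℕ} (hi : i < k) : nnStep k a c x i ≤ nnIter k a c 0 i :=
  monotone_posRoot (hc i hi) (nnDrift_le hk hc hx hi)

theorem nnStep_mono (hk : 2 ≤ k) (hc : ∀ i, i < k → 0 < c i) (hx : ∀ i, i < k → 0 < x i)
    (hxy : ∀ i, i < k → x i ≤ y i) {i : ℕ} (hi : i < k) : nnStep k a c x i ≤ nnStep k a c y i :=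
  monotone_posRoot (hc i hi) (nnDrift_mono hk hc hx hxy hi)

theorem nnIter_succ_le (hk : 2 ≤ k) (hc : ∀ i, i < k → 0 < c i) (n : ℕ) :
    ∀ i, i < k → nnIter k a c (n + 1) i ≤ nnIter k a c n i := by
  induction n with
  | zero => exact fun i hi => nnStep_le_nnIter_zero hk hc (fun _ => nnIter_pos hc 0) hi
  | succ n ih =>
    rw [nnIter_succ (n + 1), nnIter_succ n]
    exact fun i hi => nnStep_mono hk hc (fun _ => nnIter_pos hc (n + 1)) ih hi

theorem antitone_nnIter (hk : 2 ≤ k) (hc : ∀ i, i < k → 0 < c i) {i : ℕ} (hi : i < k) :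
    Antitone fun n => nnIter k a c n i :=
  antitone_nat_of_succ_le fun n => nnIter_succ_le hk hc n i hi

theorem le_nnIter_of_le_nnStep (hk : 2 ≤ k) (hc : ∀ i, i < k → 0 < c i)
    (hy : ∀ i, i < k → 0 < y i) (hsub : ∀ i, i < k → y i ≤ nnStep k a c y i) (n : ℕ) :
    ∀ i, i < k → y i ≤ nnIter k a c n i := by
  induction n with
  | zero => exact fun i hi => (hsub i hi).trans (nnStep_le_nnIter_zero hk hc hy hi)
  | succ n ih =>
    rw [nnIter_succ]
    exact fun i hi => (hsub i hi).trans (nnStep_mono hk hc hy ih hi)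

theorem nnSol_iff_nnStep_eq (hk : 2 ≤ k) (hc : ∀ i, i < k → 0 < c i)
    (hx : ∀ i, i < k → 0 < x i) : nnSol k a c x ↔ ∀ i, i < k → nnStep k a c x i = x i := by
  rw [nnSol_iff hk]
  exact forall₂_congr fun i hi => (eq_posRoot_iff (hc i hi) (hx i hi)).symm.trans eq_comm

theorem tendsto_paddedRatio {ι : Type*} {l : Filter ι} {y : ι → ℕ → ℝ}
    (hx : ∀ i, i < k → x i ≠ 0) (hy : ∀ i, i < k → Tendsto (fun n => y n i) l (nhds (x i)))
    (j : ℕ) : Tendsto (fun n => paddedRatio k c (y n) j) l (nhds (paddedRatio k c x j)) := by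
  unfold paddedRatio
  split_ifs
  · exact tendsto_const_nhds
  · exact tendsto_const_nhds.div (hy _ (by omega)) (hx _ (by omega))

theorem nnStep_eq_of_tendsto_nnIter (hk : 2 ≤ k) (hx : ∀ i, i < k → 0 < x i)
    (hlim : ∀ i, i < k → Tendsto (fun n => nnIter k a c n i) atTop (nhds (x i)))
    {i : ℕ} (hi : i < k) : nnStep k a c x i = x i := by
  have h_drift : Tendsto (fun n => nnDrift k a c (nnIter k a c n) i) atTop
      (nhds (nnDrift k a c x i)) := by
    simp only [nnDrift_eq hk hi]
    have hx0 : ∀ j, j < k → x j ≠ 0 := fun j hj => (hx j hj).ne'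
    exact (tendsto_const_nhds.sub (tendsto_paddedRatio hx0 hlim i)).sub
      (tendsto_paddedRatio hx0 hlim (i + 2))
  have h_step : Tendsto (fun n => nnIter k a c (n + 1) i) atTop (nhds (nnStep k a c x i)) :=
    (continuous_posRoot.tendsto _).comp h_drift
  exact tendsto_nhds_unique h_step ((hlim i hi).comp (tendsto_add_atTop_nat 1))

end iteration

section laplacian

open Finset

variable {k : ℕ} {a c x y : ℕ → ℝ}

theorem sub_div_eq_nnDrift_iff (hk : 2 ≤ k) {i : ℕ} (hi : i < k) :
    x i - 2 * c i / x i = nnDrift k a c x i ↔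
      x i + paddedRatio k c x i - 2 * paddedRatio k c x (i + 1) + paddedRatio k c x (i + 2)
        = a i := by
  rw [nnDrift_eq hk hi, paddedRatio_succ hi, mul_div_assoc]
  constructor <;> intro h <;> linarith

theorem le_nnStep_iff (hk : 2 ≤ k) (hc : ∀ i, i < k → 0 < c i) (hx : ∀ i, i < k → 0 < x i)
    {i : ℕ} (hi : i < k) :
    x i ≤ nnStep k a c x i ↔
      x i + paddedRatio k c x i - 2 * paddedRatio k c x (i + 1) + paddedRatio k c x (i + 2)
        ≤ a i := by
  rw [nnStep, le_posRoot_iff (hc i hi) (hx i hi), nnDrift_eq hk hi, paddedRatio_succ hi,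
    mul_div_assoc]
  constructor <;> intro h <;> linarith

theorem sum_sub_boundary_eq_sum_of_nnSol (hk : 2 ≤ k) (h : nnSol k a c x) :
    ∑ i ∈ range k, x i - c 0 / x 0 - c (k - 1) / x (k - 1) = ∑ i ∈ range k, a i := by
  set r := paddedRatio k c x
  have h_eq : ∀ i ∈ range k, a i = x i + ((r (i + 2) - r (i + 1)) - (r (i + 1) - r i)) :=
    fun i hi => by
      have := ((sub_div_eq_nnDrift_iff hk (mem_range.1 hi)).1 ((nnSol_iff hk).1 h i
        (mem_range.1 hi)))
      linarith
  have h_first : r 1 = c 0 / x 0 := paddedRatio_succ (by omega)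
  have h_last : r k = c (k - 1) / x (k - 1) := by
    simpa [Nat.sub_add_cancel (by omega : 1 ≤ k)] using
      paddedRatio_succ (c := c) (x := x) (show k - 1 < k by omega)
  have h_ghost : r 0 = 0 ∧ r (k + 1) = 0 := ⟨paddedRatio_zero, paddedRatio_of_lt (by omega)⟩
  rw [sum_congr rfl h_eq, sum_add_distrib, sum_range_sub (fun i => r (i + 1) - r i)]
  simp only [zero_add, h_ghost, h_first, h_last]
  ring

/-- `∑ x_i - c_0 / x_0 - c_{k-1} / x_{k-1}` takes the value `∑ a_i` at both solutions and is
strictly increasing in each `x_i`. -/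
theorem eq_of_le_of_nnSol (hk : 2 ≤ k) (hc : ∀ i, i < k → 0 < c i) (hy : ∀ i, i < k → 0 < y i)
    (hyx : ∀ i, i < k → y i ≤ x i) (hsy : nnSol k a c y) (hsx : nnSol k a c x) :
    ∀ i, i < k → y i = x i := by
  have h_gap : ∑ i ∈ range k, (x i - y i) + (c 0 / y 0 - c 0 / x 0)
      + (c (k - 1) / y (k - 1) - c (k - 1) / x (k - 1)) = 0 := by
    rw [sum_sub_distrib]
    linarith [sum_sub_boundary_eq_sum_of_nnSol hk hsy, sum_sub_boundary_eq_sum_of_nnSol hk hsx]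
  have h_div : ∀ i, i < k → c i / x i ≤ c i / y i := fun i hi =>
    div_le_div_of_nonneg_left (hc i hi).le (hy i hi) (hyx i hi)
  have h_nonneg : ∀ i ∈ range k, 0 ≤ x i - y i := fun i hi => sub_nonneg.2 (hyx i (mem_range.1 hi))
  have h_sum : ∑ i ∈ range k, (x i - y i) = 0 := le_antisymm
    (by linarith [h_div 0 (by omega), h_div (k - 1) (by omega)]) (sum_nonneg h_nonneg)
  intro i hi
  linarith [(sum_eq_zero_iff_of_nonneg h_nonneg).1 h_sum i (mem_range.2 hi)]

/-- The subsolution `L_i = c_i / (M q_{i+1})` with `q_j = j (k + 1 - j)`: the parabola `q`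
vanishes at both ghost sites and has second difference `-2`, so `L` satisfies
`L_i + r_i - 2 r_{i+1} + r_{i+2} = L_i - 2M ≤ a_i` once `M` is large. -/
theorem exists_pos_le_nnStep (hk : 2 ≤ k) (hc : ∀ i, i < k → 0 < c i) :
    ∃ L : ℕ → ℝ, (∀ i, i < k → 0 < L i) ∧ ∀ i, i < k → L i ≤ nnStep k a c L i := by
  set q : ℕ → ℝ := fun j => j * (k + 1 - j)
  have hq : ∀ i, i < k → 0 < q (i + 1) := fun i hi => by
    have : (i : ℝ) + 1 < k + 1 := by exact_mod_cast Nat.succ_lt_succ hi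
    simp only [q]; push_cast
    nlinarith
  obtain ⟨M, hM⟩ := exists_le ((range k).image fun i => 1 + |a i| + c i / q (i + 1))
  have hM' : ∀ i, i < k → 1 + |a i| + c i / q (i + 1) ≤ M := fun i hi =>
    hM _ (mem_image_of_mem _ (mem_range.2 hi))
  have hM_pos : 0 < M := by
    linarith [hM' 0 (by omega), abs_nonneg (a 0), div_pos (hc 0 (by omega)) (hq 0 (by omega))]
  set L : ℕ → ℝ := fun i => c i / (M * q (i + 1))
  have hL : ∀ i, i < k → 0 < L i := fun i hi => div_pos (hc i hi) (mul_pos hM_pos (hq i hi))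
  have hr : ∀ j, j ≤ k + 1 → paddedRatio k c L j = M * q j := by
    intro j hj
    rcases Nat.eq_zero_or_pos j with rfl | hj0
    · simp [paddedRatio_zero, q]
    rcases hj.lt_or_eq with hj | rfl
    · obtain ⟨i, rfl⟩ := Nat.exists_eq_add_of_lt hj0
      rw [zero_add, paddedRatio_succ (by omega), div_div_cancel₀ (hc i (by omega)).ne']
    · simp [paddedRatio_of_lt, q]
  refine ⟨L, hL, fun i hi => (le_nnStep_iff hk hc hL hi).2 ?_⟩
  rw [hr i (by omega), hr (i + 1) (by omega), hr (i + 2) (by omega)]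
  have hL_le : L i ≤ 1 := by
    rw [div_le_one (mul_pos hM_pos (hq i hi)), ← div_le_iff₀ (hq i hi)]
    linarith [hM' i hi, abs_nonneg (a i)]
  have h_parabola : q i - 2 * q (i + 1) + q (i + 2) = -2 := by
    simp only [q]; push_cast; ring
  linarith [hM' i hi, neg_abs_le (a i), div_pos (hc i hi) (hq i hi),
    congrArg (M * ·) h_parabola]

end laplacian

theorem nearest_neighbor_unique_solution_and_iteration
    (k : ℕ) (hk : 2 ≤ k) (a c : ℕ → ℝ) (hc : ∀ i, i < k → 0 < c i) :
    ∃ x : ℕ → ℝ, (∀ i, i < k → 0 < x i) ∧ nnSol k a c x ∧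
      (∀ y : ℕ → ℝ, (∀ i, i < k → 0 < y i) → nnSol k a c y →
        ∀ i, i < k → y i = x i) ∧
      (∀ i, i < k →
        (Antitone fun n : ℕ => nnIter k a c n i) ∧
        Tendsto (fun n : ℕ => nnIter k a c n i) atTop (nhds (x i))) := by
  obtain ⟨L, hL_pos, hL_sub⟩ := exists_pos_le_nnStep (a := a) hk hc
  have hL_le := le_nnIter_of_le_nnStep hk hc hL_pos hL_sub
  set x : ℕ → ℝ := fun i => ⨅ n, nnIter k a c n i
  have hx_lim : ∀ i, i < k → Tendsto (fun n => nnIter k a c n i) atTop (nhds (x i)) :=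
    fun i hi => tendsto_atTop_ciInf (antitone_nnIter hk hc hi)
      ⟨L i, Set.forall_mem_range.2 fun n => hL_le n i hi⟩
  have hx_pos : ∀ i, i < k → 0 < x i := fun i hi =>
    (hL_pos i hi).trans_le (le_ciInf fun n => hL_le n i hi)
  have hx_sol : nnSol k a c x := (nnSol_iff_nnStep_eq hk hc hx_pos).2 fun i hi =>
    nnStep_eq_of_tendsto_nnIter hk hx_pos hx_lim hi
  refine ⟨x, hx_pos, hx_sol, fun y hy hsy => ?_,
    fun i hi => ⟨antitone_nnIter hk hc hi, hx_lim i hi⟩⟩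
  have hy_le_iter := le_nnIter_of_le_nnStep hk hc hy fun i hi =>
    ((nnSol_iff_nnStep_eq hk hc hy).1 hsy i hi).ge
  exact eq_of_le_of_nnSol hk hc hy
    (fun i hi => ge_of_tendsto' (hx_lim i hi) fun n => hy_le_iter n i hi) hsy hx_sol
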